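/- arXiv:2510.03816 — 2 statements merged into one kernel-verified Lean document; each statement's English description precedes it below -/
import Mathlib

section
/- Let G and H be finite simple graphs on the same vertex set {1,…,n}, with adjacency matrices A(G), A(H) and degree matrices D(G), D(H), regarded as matrices over ℚ, and view A(G) − μD(G) and A(H) − μD(H) as matrices over the rational function field ℚ(μ). Then A(G) − μD(G) and A(H) − μD(H) are similar over ℚ(μ) if and only if G and H have the same generalized characteristic polynomial, i.e. det(tI − (A(G) − μD(G))) = det(tI − (A(H) − μD(H))) as polynomials in t over ℚ(μ). -/
/-!
A transcendental real number gives a field embedding `ℚ(μ) → ℝ`. Under it, `A(G) − μD(G)` and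
`A(H) − μD(H)` become real symmetric matrices with the same characteristic polynomial, so both are
orthogonally similar to the diagonal matrix of their (sorted) common eigenvalues.

Similarity descends from `ℝ` to the infinite field `ℚ(μ)`: write a real conjugating matrix as
`∑ bₗ • Pₗ` with the `bₗ` linearly independent over `ℚ(μ)`; each `Pₗ` intertwines the two matrices,
and the determinant of the generic combination `∑ Xₗ • Pₗ` is a nonzero polynomial, so it is
nonzero at some point of `ℚ(μ)`, giving an invertible intertwiner over `ℚ(μ)`.
-/

namespace Matrix

variable {n : Type*}

section Descent

variable {F K : Type*} [Field F] [Field K] [Algebra F K]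

theorem eq_zero_of_sum_smul_map_eq_zero {ι : Type*} [Fintype ι] {b : ι → K}
    (hb : LinearIndependent F b) {Q : ι → Matrix n n F}
    (h : ∑ l, b l • (Q l).map (algebraMap F K) = 0) (l : ι) : Q l = 0 := by
  ext i j
  refine Fintype.linearIndependent_iff.1 hb (fun l => Q l i j) ?_ l
  have hij := congrFun (congrFun h i) j
  simp only [sum_apply, smul_apply, map_apply, smul_eq_mul, zero_apply] at hij
  simpa [Algebra.smul_def, mul_comm] using hij

variable [Fintype n]

theorem exists_linearIndependent_sum_smul_map (M : Matrix n n K) :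
    ∃ (d : ℕ) (b : Fin d → K) (P : Fin d → Matrix n n F), LinearIndependent F b ∧
      M = ∑ l, b l • (P l).map (algebraMap F K) := by
  set S := Submodule.span F (Set.range fun p : n × n => M p.1 p.2)
  have : FiniteDimensional F S := FiniteDimensional.span_of_finite F (Set.finite_range _)
  have hmem i j : M i j ∈ S := Submodule.subset_span ⟨(i, j), rfl⟩
  let b := Module.finBasis F S
  refine ⟨_, fun l => b l, fun l => of fun i j => b.repr ⟨M i j, hmem i j⟩ l,
    b.linearIndependent.map' S.subtype S.ker_subtype, ?_⟩
  ext i j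
  have hrepr := congrArg Subtype.val (b.sum_repr ⟨M i j, hmem i j⟩)
  simp only [Submodule.coe_sum, Submodule.coe_smul] at hrepr
  simp only [sum_apply, smul_apply, map_apply, of_apply, smul_eq_mul]
  conv_lhs => rw [← hrepr]
  simp [Algebra.smul_def, mul_comm]

variable [DecidableEq n]

theorem exists_det_sum_smul_ne_zero [Infinite F] {ι : Type*} [Fintype ι]
    (P : ι → Matrix n n F) (b : ι → K)
    (h : (∑ l, b l • (P l).map (algebraMap F K)).det ≠ 0) :
    ∃ c : ι → F, (∑ l, c l • P l).det ≠ 0 := by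
  let generic : Matrix n n (MvPolynomial ι F) :=
    ∑ l, (MvPolynomial.X l : MvPolynomial ι F) • (P l).map MvPolynomial.C
  have hb : MvPolynomial.aeval b generic.det = (∑ l, b l • (P l).map (algebraMap F K)).det := by
    rw [AlgHom.map_det]
    congr 1
    ext i j
    simp [generic, sum_apply]
  have hgeneric : generic.det ≠ 0 := fun h0 => h (by rw [← hb, h0, map_zero])
  obtain ⟨c, hc⟩ : ∃ c, MvPolynomial.eval c generic.det ≠ 0 := by
    by_contra! hc
    exact hgeneric (MvPolynomial.funext fun c => by rw [hc, map_zero])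
  refine ⟨c, ?_⟩
  convert hc using 1
  rw [RingHom.map_det]
  congr 1
  ext i j
  simp [generic, sum_apply]

theorem isConj_of_isConj_map [Infinite F] {A B : Matrix n n F}
    (h : IsConj (A.map (algebraMap F K)) (B.map (algebraMap F K))) : IsConj A B := by
  obtain ⟨u, hu⟩ := h
  obtain ⟨d, b, P, hb, hu_eq⟩ := exists_linearIndependent_sum_smul_map (F := F) (u : Matrix n n K)
  have hP l : P l * A = B * P l := by
    refine sub_eq_zero.1 (eq_zero_of_sum_smul_map_eq_zero hb (Q := fun l => P l * A - B * P l) ?_ l)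
    have hu' := hu.eq
    rw [hu_eq, ← sub_eq_zero] at hu'
    simpa [Matrix.map_sub, Matrix.map_mul, Finset.sum_mul, Finset.mul_sum, smul_sub] using hu'
  obtain ⟨c, hc⟩ := exists_det_sum_smul_ne_zero P b (hu_eq ▸ u.isUnit.map detMonoidHom).ne_zero
  have hunit : IsUnit (∑ l, c l • P l) := (isUnit_iff_isUnit_det _).2 (isUnit_iff_ne_zero.2 hc)
  refine ⟨hunit.unit, ?_⟩
  simp [SemiconjBy, Finset.sum_mul, Finset.mul_sum, hP]

end Descent

variable [Fintype n] [DecidableEq n]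

theorem isConj_iff_exists_isUnit_inv_mul_mul_eq {R : Type*} [CommRing R] {A B : Matrix n n R} :
    IsConj A B ↔ ∃ M : Matrix n n R, IsUnit M ∧ M⁻¹ * A * M = B := by
  constructor
  · rintro ⟨c, hc⟩
    refine ⟨↑c⁻¹, (c⁻¹).isUnit, ?_⟩
    rw [coe_units_inv, nonsing_inv_nonsing_inv _ ((isUnit_iff_isUnit_det _).1 c.isUnit), hc.eq,
      ← coe_units_inv, mul_assoc, Units.mul_inv, mul_one]
  · rintro ⟨M, hM, rfl⟩
    refine ⟨hM.unit⁻¹, ?_⟩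
    rw [SemiconjBy, coe_units_inv, IsUnit.unit_spec, mul_assoc, mul_assoc,
      mul_nonsing_inv _ ((isUnit_iff_isUnit_det _).1 hM), mul_one]

theorem charpoly_eq_of_isConj {R : Type*} [CommRing R] {A B : Matrix n n R} (h : IsConj A B) :
    A.charpoly = B.charpoly := by
  obtain ⟨c, hc⟩ := h
  rw [← charpoly_units_conj c A, hc.eq, ← coe_units_inv, mul_assoc, Units.mul_inv, mul_one]

namespace IsHermitian

variable {𝕜 : Type*} [RCLike 𝕜] {A B : Matrix n n 𝕜}

theorem isConj_diagonal_eigenvalues (hA : A.IsHermitian) :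
    IsConj A (diagonal (RCLike.ofReal ∘ hA.eigenvalues)) :=
  ⟨Unitary.toUnits (star hA.eigenvectorUnitary), by
    rw [SemiconjBy, ← hA.conjStarAlgAut_star_eigenvectorUnitary, Unitary.conjStarAlgAut_apply]
    simp [mul_assoc]⟩

theorem isConj_of_charpoly_eq (hA : A.IsHermitian) (hB : B.IsHermitian)
    (h : A.charpoly = B.charpoly) : IsConj A B := by
  have heig := (hA.eigenvalues_eq_eigenvalues_iff hB).2 h
  exact hA.isConj_diagonal_eigenvalues.trans (heig ▸ hB.isConj_diagonal_eigenvalues).symm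

end IsHermitian

theorem IsSymm.isConj_of_charpoly_eq {F : Type*} [Field F] (φ : F →+* ℝ) {A B : Matrix n n F}
    (hA : A.IsSymm) (hB : B.IsSymm) (h : A.charpoly = B.charpoly) : IsConj A B := by
  let _ : Algebra F ℝ := φ.toAlgebra
  have : CharZero F := φ.charZero
  refine isConj_of_isConj_map (K := ℝ) (IsHermitian.isConj_of_charpoly_eq ?_ ?_ ?_)
  · exact isHermitian_iff_isSymm.2 (hA.map _)
  · exact isHermitian_iff_isSymm.2 (hB.map _)
  · rw [charpoly_map, charpoly_map, h]

end Matrix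

theorem SimpleGraph.isSymm_adjMatrix_sub_smul_diagonal_degree {V R : Type*} [Fintype V]
    [DecidableEq V] [CommRing R] (G : SimpleGraph V) [DecidableRel G.Adj] (t : R) :
    (G.adjMatrix R - t • Matrix.diagonal (fun i => (G.degree i : R))).IsSymm :=
  (G.isSymm_adjMatrix).sub ((Matrix.isSymm_diagonal _).smul t)

theorem RatFunc.nonempty_ringHom_real : Nonempty (RatFunc ℚ →+* ℝ) :=
  have : Algebra.IsAlgebraic ℤ ℚ := IsLocalization.isAlgebraic ℚ (nonZeroDivisors ℤ)
  have ht : Transcendental ℚ (liouvilleNumber 2) :=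
    (transcendental_liouvilleNumber le_rfl).extendScalars ℚ
  ⟨(IntermediateField.val _).toRingHom.comp (algEquivOfTranscendental _ ht).toRingHom⟩

/-- For graphs `G`, `H` on vertex set `{1,…,n}`, the matrices `A(G) − μD(G)` and
`A(H) − μD(H)`, viewed over the rational function field `ℚ(μ)`, are similar over `ℚ(μ)`
if and only if `G` and `H` have the same generalized characteristic polynomial
`det(tI − (A − μD))` over `ℚ(μ)`. -/
theorem similar_over_ratFunc_iff_same_generalized_charpoly
    (n : ℕ) (G H : SimpleGraph (Fin n)) [DecidableRel G.Adj] [DecidableRel H.Adj] :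
    (∃ M : Matrix (Fin n) (Fin n) (RatFunc ℚ), IsUnit M ∧
        M⁻¹ * (G.adjMatrix (RatFunc ℚ)
          - (RatFunc.X : RatFunc ℚ) • Matrix.diagonal (fun i => (G.degree i : RatFunc ℚ))) * M
        = H.adjMatrix (RatFunc ℚ)
          - (RatFunc.X : RatFunc ℚ) • Matrix.diagonal (fun i => (H.degree i : RatFunc ℚ))) ↔
      (G.adjMatrix (RatFunc ℚ)
          - (RatFunc.X : RatFunc ℚ) • Matrix.diagonal (fun i => (G.degree i : RatFunc ℚ))).charpoly
        = (H.adjMatrix (RatFunc ℚ)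
          - (RatFunc.X : RatFunc ℚ) • Matrix.diagonal (fun i => (H.degree i : RatFunc ℚ))).charpoly := by
  rw [← Matrix.isConj_iff_exists_isUnit_inv_mul_mul_eq]
  refine ⟨Matrix.charpoly_eq_of_isConj, fun h => ?_⟩
  obtain ⟨φ⟩ := RatFunc.nonempty_ringHom_real
  exact (G.isSymm_adjMatrix_sub_smul_diagonal_degree _).isConj_of_charpoly_eq φ
    (H.isSymm_adjMatrix_sub_smul_diagonal_degree _) h
end

section
/- Let G and H be finite simple graphs on the same vertex set {1,…,n}, with adjacency matrices A(G), A(H) and degree matrices D(G), D(H). If G and H are degree-similar (there exists an invertible real matrix M with M⁻¹A(G)M = A(H) and M⁻¹D(G)M = D(H)), then the matrices A(G) − μD(G) and A(H) − μD(H), viewed over the rational function field ℚ(μ), are similar over ℚ(μ). -/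
/-!
Write the real matrix `M` as `∑ₖ cₖ Xₖ` with rational matrices `Xₖ` and reals `cₖ` linearly
independent over `ℚ`. Since `A(G), D(G), A(H), D(H)` are rational, every `Xₖ` intertwines
them as `M` does. The polynomial `det (∑ₖ Tₖ Xₖ) ∈ ℚ[T]` does not vanish at `T = c`, hence is
nonzero, hence does not vanish at some rational point `t`. Then `N = ∑ₖ tₖ Xₖ` is a rational
degree-similarity, which intertwines the pencils `A − μD` over any extension of `ℚ`.
-/

open Matrix

namespace Matrix

variable {m n ι K L : Type*} [Fintype ι]

theorem sum_smul_map_algebraMap_apply [CommSemiring K] [CommSemiring L] [Algebra K L]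
    (c : ι → L) (X : ι → Matrix m n K) (i : m) (j : n) :
    (∑ k, c k • (X k).map (algebraMap K L)) i j = ∑ k, X k i j • c k := by
  simp only [sum_apply, smul_apply, map_apply, smul_eq_mul, Algebra.smul_def, mul_comm]

theorem exists_linearIndependent_sum_smul_map_s6 [Fintype m] [Fintype n] [Field K] [CommRing L]
    [Algebra K L] (M : Matrix m n L) :
    ∃ (r : ℕ) (c : Fin r → L) (X : Fin r → Matrix m n K),
      LinearIndependent K c ∧ M = ∑ k, c k • (X k).map (algebraMap K L) := by
  set V := Submodule.span K (Set.range fun p : m × n => M p.1 p.2)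
  have : FiniteDimensional K V := FiniteDimensional.span_of_finite K (Set.finite_range _)
  let b := Module.finBasis K V
  have hM : ∀ i j, M i j ∈ V := fun i j => Submodule.subset_span ⟨(i, j), rfl⟩
  refine ⟨_, fun k => b k, fun k => of fun i j => b.repr ⟨M i j, hM i j⟩ k,
    b.linearIndependent.map' V.subtype V.ker_subtype, ?_⟩
  ext i j
  rw [sum_smul_map_algebraMap_apply]
  have h := congrArg Subtype.val (b.sum_repr ⟨M i j, hM i j⟩)
  simpa only [Submodule.coe_sum, Submodule.coe_smul, of_apply] using h.symm

theorem eq_zero_of_sum_smul_map_eq_zero_s6 [Field K] [CommRing L] [Algebra K L] {c : ι → L}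
    (hc : LinearIndependent K c) {Y : ι → Matrix m n K}
    (hY : ∑ k, c k • (Y k).map (algebraMap K L) = 0) (k : ι) : Y k = 0 := by
  ext i j
  have := congrFun (congrFun hY i) j
  rw [sum_smul_map_algebraMap_apply] at this
  exact Fintype.linearIndependent_iff.mp hc (fun k => Y k i j) this k

noncomputable def genericLinearCombination [CommSemiring K] (X : ι → Matrix m n K) :
    Matrix m n (MvPolynomial ι K) :=
  ∑ k, (MvPolynomial.X k : MvPolynomial ι K) • (X k).map MvPolynomial.C

theorem aeval_det_genericLinearCombination [Fintype n] [DecidableEq n] [CommRing K] [CommRing L]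
    [Algebra K L] (X : ι → Matrix n n K) (s : ι → L) :
    MvPolynomial.aeval s (genericLinearCombination X).det
      = (∑ k, s k • (X k).map (algebraMap K L)).det := by
  rw [AlgHom.map_det]
  congr 1
  ext i j
  simp [genericLinearCombination, sum_apply, MvPolynomial.aeval_X]

theorem exists_isUnit_sum_smul_of_isUnit_sum_smul_map [Fintype n] [DecidableEq n] [Field K]
    [Infinite K] [CommRing L] [Nontrivial L] [Algebra K L] (X : ι → Matrix n n K) (c : ι → L)
    (hc : IsUnit (∑ k, c k • (X k).map (algebraMap K L))) :
    ∃ t : ι → K, IsUnit (∑ k, t k • X k) := by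
  have hP : (genericLinearCombination X).det ≠ 0 := by
    intro h
    rw [isUnit_iff_isUnit_det, ← aeval_det_genericLinearCombination, h, map_zero] at hc
    exact not_isUnit_zero hc
  obtain ⟨t, ht⟩ : ∃ t : ι → K, MvPolynomial.aeval t (genericLinearCombination X).det ≠ 0 := by
    by_contra! h
    exact hP (MvPolynomial.funext fun t => by simpa using h t)
  refine ⟨t, (isUnit_iff_isUnit_det _).mpr (isUnit_iff_ne_zero.mpr ?_)⟩
  simpa only [aeval_det_genericLinearCombination, Algebra.algebraMap_self, RingHom.coe_id,
    map_id] using ht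

theorem exists_isUnit_mul_eq_mul_of_map [Fintype n] [DecidableEq n] [Field K] [Infinite K]
    [CommRing L] [Nontrivial L] [Algebra K L] {κ : Type*} (A B : κ → Matrix n n K)
    {M : Matrix n n L} (hM : IsUnit M)
    (hAB : ∀ i, (A i).map (algebraMap K L) * M = M * (B i).map (algebraMap K L)) :
    ∃ N : Matrix n n K, IsUnit N ∧ ∀ i, A i * N = N * B i := by
  obtain ⟨r, c, X, hc, rfl⟩ := exists_linearIndependent_sum_smul_map_s6 (K := K) M
  have hX : ∀ i k, A i * X k = X k * B i := fun i k => by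
    rw [← sub_eq_zero]
    refine eq_zero_of_sum_smul_map_eq_zero_s6 hc (Y := fun k => A i * X k - X k * B i) ?_ k
    simpa only [Matrix.map_sub _ (map_sub _), Matrix.map_mul, smul_sub, Finset.sum_sub_distrib,
      sub_eq_zero, Finset.mul_sum, Finset.sum_mul, Matrix.mul_smul, Matrix.smul_mul] using hAB i
  obtain ⟨t, ht⟩ := exists_isUnit_sum_smul_of_isUnit_sum_smul_map X c hM
  refine ⟨_, ht, fun i => ?_⟩
  simp only [Finset.mul_sum, Finset.sum_mul, Matrix.mul_smul, Matrix.smul_mul, hX]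

theorem inv_mul_mul_eq_iff_mul_eq_mul [Fintype n] [DecidableEq n] [CommRing K]
    {M : Matrix n n K} (hM : IsUnit M) (A B : Matrix n n K) :
    M⁻¹ * A * M = B ↔ A * M = M * B := by
  have := hM.invertible
  rw [Matrix.mul_assoc, inv_mul_eq_iff_eq_mul_of_invertible, eq_comm]

end Matrix

namespace SimpleGraph

variable {V R S : Type*} (G : SimpleGraph V) [DecidableRel G.Adj]

theorem adjMatrix_map [NonAssocSemiring R] [NonAssocSemiring S] (f : R →+* S) :
    (G.adjMatrix R).map f = G.adjMatrix S := by
  ext i j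
  simp [adjMatrix, apply_ite f]

theorem degMatrix_map [Fintype V] [DecidableEq V] [NonAssocSemiring R] [NonAssocSemiring S]
    (f : R →+* S) : (G.degMatrix R).map f = G.degMatrix S := by
  simp [degMatrix, diagonal_map]

end SimpleGraph

/-- If two graphs `G`, `H` on vertex set `{1,…,n}` are degree-similar (there is an invertible
real matrix `M` with `M⁻¹ A(G) M = A(H)` and `M⁻¹ D(G) M = D(H)`), then the matrices
`A(G) − μD(G)` and `A(H) − μD(H)`, viewed over the rational function field `ℚ(μ)`,
are similar over `ℚ(μ)`. -/
theorem degree_similar_implies_similar_over_ratFunc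
    (n : ℕ) (G H : SimpleGraph (Fin n)) [DecidableRel G.Adj] [DecidableRel H.Adj]
    (M : Matrix (Fin n) (Fin n) ℝ) (hM : IsUnit M)
    (hA : M⁻¹ * G.adjMatrix ℝ * M = H.adjMatrix ℝ)
    (hD : M⁻¹ * Matrix.diagonal (fun i => (G.degree i : ℝ)) * M
        = Matrix.diagonal (fun i => (H.degree i : ℝ))) :
    ∃ N : Matrix (Fin n) (Fin n) (RatFunc ℚ), IsUnit N ∧
      N⁻¹ * (G.adjMatrix (RatFunc ℚ)
          - (RatFunc.X : RatFunc ℚ) • Matrix.diagonal (fun i => (G.degree i : RatFunc ℚ))) * N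
        = H.adjMatrix (RatFunc ℚ)
          - (RatFunc.X : RatFunc ℚ) • Matrix.diagonal (fun i => (H.degree i : RatFunc ℚ)) := by
  obtain ⟨N, hN, hAD⟩ := exists_isUnit_mul_eq_mul_of_map (K := ℚ)
    ![G.adjMatrix ℚ, G.degMatrix ℚ] ![H.adjMatrix ℚ, H.degMatrix ℚ] hM <| by
      simp only [Fin.forall_fin_two, cons_val_zero, cons_val_one, SimpleGraph.adjMatrix_map,
        SimpleGraph.degMatrix_map, ← inv_mul_mul_eq_iff_mul_eq_mul hM]
      exact ⟨hA, hD⟩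
  simp only [Fin.forall_fin_two, cons_val_zero, cons_val_one] at hAD
  set ψ := algebraMap ℚ (RatFunc ℚ)
  have hNψ : IsUnit (N.map ψ) := hN.map ψ.mapMatrix
  have hAψ : G.adjMatrix _ * N.map ψ = N.map ψ * H.adjMatrix _ := by
    rw [← G.adjMatrix_map ψ, ← H.adjMatrix_map ψ, ← Matrix.map_mul, ← Matrix.map_mul, hAD.1]
  have hDψ : G.degMatrix _ * N.map ψ = N.map ψ * H.degMatrix _ := by
    rw [← G.degMatrix_map ψ, ← H.degMatrix_map ψ, ← Matrix.map_mul, ← Matrix.map_mul, hAD.2]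
  refine ⟨N.map ψ, hNψ, ?_⟩
  rw [inv_mul_mul_eq_iff_mul_eq_mul hNψ, sub_mul, mul_sub, Matrix.smul_mul, Matrix.mul_smul, hAψ]
  exact congrArg _ (congrArg _ hDψ)
end
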